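/- For every graph G, core(G) = core(G[L^c(G)]) ∪ (core(G) ∩ L(G)), where core(G) ∩ L(G) equals the intersection over all maximum independent sets S of G of S ∩ L(G), and core(G) ∩ L(G) ⊆ nucleus(G). -/

import Mathlib

open Finset

variable {V : Type*} [Fintype V] [DecidableEq V] (G : SimpleGraph V) [DecidableRel G.Adj]

/-- `N(S)`: the set of vertices adjacent to some vertex of `S`. -/
def nbhd (S : Finset V) : Finset V := S.biUnion (fun v => G.neighborFinset v)

/-- `S` is an independent set of `G`. -/
def Indep (S : Finset V) : Prop := ∀ u ∈ S, ∀ v ∈ S, ¬ G.Adj u v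

/-- The difference `d_G(S) = |S| - |N(S)|`. -/
def diffI (S : Finset V) : ℤ := (S.card : ℤ) - ((nbhd G S).card : ℤ)

/-- `S` is a maximum independent set of `G`. -/
def IsMaxIndep (S : Finset V) : Prop :=
  Indep G S ∧ ∀ T : Finset V, Indep G T → T.card ≤ S.card

/-- `I` is a critical independent set of `G`. -/
def IsCritIndep (I : Finset V) : Prop :=
  Indep G I ∧ ∀ J : Finset V, Indep G J → diffI G J ≤ diffI G I

/-- `I` is a maximum critical independent set of `G`. -/
def IsMaxCritIndep (I : Finset V) : Prop :=
  IsCritIndep G I ∧ ∀ J : Finset V, IsCritIndep G J → J.card ≤ I.card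

/-- `core(G)`: intersection of all maximum independent sets. -/
def core : Set V := {v | ∀ S : Finset V, IsMaxIndep G S → v ∈ S}

/-- `corona(G)`: union of all maximum independent sets. -/
def corona : Set V := {v | ∃ S : Finset V, IsMaxIndep G S ∧ v ∈ S}

/-- `nucleus(G)`: intersection of all maximum critical independent sets. -/
def nucleus : Set V := {v | ∀ S : Finset V, IsMaxCritIndep G S → v ∈ S}

/-- `diadem(G)`: union of all maximum critical independent sets. -/
def diadem : Set V := {v | ∃ S : Finset V, IsMaxCritIndep G S ∧ v ∈ S}

/-- `ker(G)`: intersection of all critical independent sets. -/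
def kerS : Set V := {v | ∀ S : Finset V, IsCritIndep G S → v ∈ S}

/-- A matching of `G`, given as an involution of the vertex set:
unmatched vertices are fixed points, matched vertices are sent to their partner. -/
def IsMatching (M : V → V) : Prop :=
  Function.Involutive M ∧ ∀ v, M v ≠ v → G.Adj v (M v)

/-- Twice the number of edges of the matching `M`, i.e. the number of matched vertices. -/
def matchSize (M : V → V) : ℕ := (univ.filter fun v => M v ≠ v).card

/-- `M` is a maximum matching of `G`. -/
def IsMaxMatching (M : V → V) : Prop :=
  IsMatching G M ∧ ∀ M' : V → V, IsMatching G M' → matchSize M' ≤ matchSize M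

/-- `M` is a matching of the induced subgraph `G[L]`. -/
def IsMatchingOn (L : Finset V) (M : V → V) : Prop :=
  IsMatching G M ∧ ∀ v, M v ≠ v → v ∈ L

/-- `M` is a maximum matching of the induced subgraph `G[L]`. -/
def IsMaxMatchingOn (L : Finset V) (M : V → V) : Prop :=
  IsMatchingOn G L M ∧ ∀ M' : V → V, IsMatchingOn G L M' → matchSize M' ≤ matchSize M

/-- `S` is a maximum independent set of the induced subgraph `G[L]`. -/
def IsMaxIndepOn (L : Finset V) (S : Finset V) : Prop :=
  S ⊆ L ∧ Indep G S ∧ ∀ T : Finset V, T ⊆ L → Indep G T → T.card ≤ S.card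

/-- `core` of the induced subgraph `G[L]`. -/
def coreOn (L : Finset V) : Set V := {v | ∀ S : Finset V, IsMaxIndepOn G L S → v ∈ S}

/-- `D(G[L])`: vertices of `L` missed by some maximum matching of `G[L]`. -/
def Dset (L : Finset V) : Set V := {v | v ∈ L ∧ ∃ M : V → V, IsMaxMatchingOn G L M ∧ M v = v}

/-- The Larson boundary `∂_L(G)` of the set `L`. -/
def boundaryL (L : Finset V) : Set V := {v | v ∈ L ∧ ∃ w, w ∉ L ∧ G.Adj v w}

/-- The critical difference `d(G)`. -/
noncomputable def critDiff : ℤ := sSup {d : ℤ | ∃ X : Finset V, diffI G X = d}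

/-- The difference of `S` computed in the induced subgraph `G[L]`. -/
def diffOn (L : Finset V) (S : Finset V) : ℤ := (S.card : ℤ) - ((nbhd G S ∩ L).card : ℤ)

/-- The critical difference of the induced subgraph `G[L]`. -/
noncomputable def critDiffOn (L : Finset V) : ℤ := sSup {d : ℤ | ∃ X : Finset V, X ⊆ L ∧ diffOn G L X = d}

/-- `G` is a König–Egerváry graph: `α(G) + μ(G) = |V(G)|`. -/
def KonigEgervary : Prop :=
  ∃ (S : Finset V) (M : V → V), IsMaxIndep G S ∧ IsMaxMatching G M ∧
    2 * S.card + matchSize M = 2 * Fintype.card V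

/-
For a critical independent set `I` and `L = I ∪ N(I)`, every independent set meets `L` in at most
`|I|` vertices: its part `X` inside `N(I)` satisfies `|X| ≤ |I ∩ N(X)|`, as otherwise deleting
`N(X)` from `I` would increase `|I| - |N(I)|`. So `α(G) = |I| + α(G[L^c])`: a maximum independent
set of `G` leaves a maximum independent set of `G[L^c]` outside `L`, and `I ∪ T` is maximum
independent for every maximum independent `T` of `G[L^c]`. This splits `core(G)` along `L`.
For the nucleus, `L` is the same for all maximum critical independent sets (by supermodularity of
`|X| - |N(X)|`), and each of them, `J`, is the trace on `L` of the maximum independent set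
`J ∪ (S \ L)`.
-/

def IsCritical (X : Finset V) : Prop := ∀ Y : Finset V, diffI G Y ≤ diffI G X

section

variable {G}

theorem mem_nbhd {S : Finset V} {v : V} : v ∈ nbhd G S ↔ ∃ u ∈ S, G.Adj u v := by
  simp [nbhd, SimpleGraph.mem_neighborFinset]

theorem nbhd_mono {A B : Finset V} (h : A ⊆ B) : nbhd G A ⊆ nbhd G B :=
  biUnion_subset_biUnion_of_subset_left _ h

theorem nbhd_union (A B : Finset V) : nbhd G (A ∪ B) = nbhd G A ∪ nbhd G B :=
  union_biUnion

omit [Fintype V] [DecidableEq V] [DecidableRel G.Adj] in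
theorem Indep.mono {A B : Finset V} (hB : Indep G B) (h : A ⊆ B) : Indep G A :=
  fun u hu v hv => hB u (h hu) v (h hv)

theorem Indep.notMem_nbhd {A : Finset V} (hA : Indep G A) {v : V} (hv : v ∈ A) :
    v ∉ nbhd G A := by
  rw [mem_nbhd]
  rintro ⟨u, hu, huv⟩
  exact hA u hu v hv huv

theorem Indep.union {A B : Finset V} (hA : Indep G A) (hB : Indep G B)
    (hAB : Disjoint (nbhd G A) B) : Indep G (A ∪ B) := by
  have hBA : ∀ a ∈ A, ∀ b ∈ B, ¬ G.Adj a b := fun a ha b hb hab =>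
    disjoint_left.1 hAB (mem_nbhd.2 ⟨a, ha, hab⟩) hb
  intro u hu v hv huv
  rcases mem_union.1 hu with hu | hu <;> rcases mem_union.1 hv with hv | hv
  · exact hA u hu v hv huv
  · exact hBA u hu v hv huv
  · exact hBA v hv u hu huv.symm
  · exact hB u hu v hv huv

theorem indep_sdiff_nbhd (A : Finset V) : Indep G (A \ nbhd G A) := by
  intro u hu v hv huv
  exact (mem_sdiff.1 hv).2 (mem_nbhd.2 ⟨u, (mem_sdiff.1 hu).1, huv⟩)

theorem diffI_add_diffI_le (A B : Finset V) :
    diffI G A + diffI G B ≤ diffI G (A ∪ B) + diffI G (A ∩ B) := by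
  have hV := card_union_add_card_inter A B
  have hN := card_union_add_card_inter (nbhd G A) (nbhd G B)
  have hNinter : #(nbhd G (A ∩ B)) ≤ #(nbhd G A ∩ nbhd G B) :=
    card_le_card (subset_inter (nbhd_mono inter_subset_left) (nbhd_mono inter_subset_right))
  simp only [diffI, nbhd_union]
  omega

theorem diffI_le_diffI_sdiff_nbhd (A : Finset V) : diffI G A ≤ diffI G (A \ nbhd G A) := by
  have hA := card_sdiff_add_card_inter A (nbhd G A)
  have hN : nbhd G (A \ nbhd G A) ⊆ nbhd G A \ (A ∩ nbhd G A) := by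
    intro w hw
    obtain ⟨b, hb, hbw⟩ := mem_nbhd.1 hw
    refine mem_sdiff.2 ⟨nbhd_mono sdiff_subset hw, fun hwA => ?_⟩
    exact (mem_sdiff.1 hb).2 (mem_nbhd.2 ⟨w, (mem_inter.1 hwA).1, hbw.symm⟩)
  have hNcard := card_le_card hN
  rw [card_sdiff_of_subset inter_subset_right] at hNcard
  have := card_le_card (inter_subset_right : A ∩ nbhd G A ⊆ nbhd G A)
  simp only [diffI]
  omega

theorem IsCritical.union {A B : Finset V} (hA : IsCritical G A) (hB : IsCritical G B) :
    IsCritical G (A ∪ B) := fun Y => by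
  linarith [diffI_add_diffI_le (G := G) A B, hA Y, hB (A ∩ B)]

theorem IsCritical.sdiff_nbhd {A : Finset V} (hA : IsCritical G A) :
    IsCritical G (A \ nbhd G A) :=
  fun Y => (hA Y).trans (diffI_le_diffI_sdiff_nbhd A)

theorem isCritIndep_iff {I : Finset V} : IsCritIndep G I ↔ Indep G I ∧ IsCritical G I :=
  ⟨fun h => ⟨h.1, fun X => (diffI_le_diffI_sdiff_nbhd X).trans (h.2 _ (indep_sdiff_nbhd X))⟩,
    fun h => ⟨h.1, fun J _ => h.2 J⟩⟩

theorem IsCritIndep.isCritical {I : Finset V} (hI : IsCritIndep G I) : IsCritical G I :=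
  (isCritIndep_iff.1 hI).2

theorem IsCritIndep.card_le_card_inter_nbhd {I X : Finset V} (hI : IsCritIndep G I)
    (hX : X ⊆ nbhd G I) : #X ≤ #(I ∩ nbhd G X) := by
  have hJ := card_sdiff_add_card_inter I (nbhd G X)
  have hN : nbhd G (I \ nbhd G X) ⊆ nbhd G I \ X := by
    intro w hw
    obtain ⟨j, hj, hjw⟩ := mem_nbhd.1 hw
    refine mem_sdiff.2 ⟨nbhd_mono sdiff_subset hw, fun hwX => ?_⟩
    exact (mem_sdiff.1 hj).2 (mem_nbhd.2 ⟨w, hwX, hjw.symm⟩)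
  have hNcard := card_le_card hN
  rw [card_sdiff_of_subset hX] at hNcard
  have := card_le_card hX
  have hdiff := hI.2 _ (hI.1.mono (sdiff_subset : I \ nbhd G X ⊆ I))
  simp only [diffI] at hdiff
  omega

theorem IsCritIndep.card_inter_union_nbhd_le {I S : Finset V} (hI : IsCritIndep G I)
    (hS : Indep G S) : #(S ∩ (I ∪ nbhd G I)) ≤ #I := by
  have hsplit : S ∩ (I ∪ nbhd G I) = (I ∩ S) ∪ (S ∩ nbhd G I) := by
    rw [inter_union_distrib_left, inter_comm S I]
  have hout : I ∩ nbhd G (S ∩ nbhd G I) ⊆ I \ S := by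
    intro v hv
    obtain ⟨hvI, hvN⟩ := mem_inter.1 hv
    obtain ⟨s, hs, hsv⟩ := mem_nbhd.1 hvN
    exact mem_sdiff.2 ⟨hvI, fun hvS => hS s (mem_inter.1 hs).1 v hvS hsv⟩
  calc #(S ∩ (I ∪ nbhd G I)) ≤ #(I ∩ S) + #(S ∩ nbhd G I) := by
        rw [hsplit]; exact card_union_le _ _
    _ ≤ #(I ∩ S) + #(I \ S) := by
        have := (hI.card_le_card_inter_nbhd inter_subset_right).trans (card_le_card hout)
        omega
    _ = #I := card_inter_add_card_sdiff I S

theorem IsMaxCritIndep.sdiff_nbhd_subset {I J : Finset V} (hI : IsMaxCritIndep G I)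
    (hJ : IsCritIndep G J) : J \ nbhd G I ⊆ I := by
  set D := (I ∪ J) \ nbhd G (I ∪ J)
  have hD : IsCritical G D := (hI.1.isCritical.union hJ.isCritical).sdiff_nbhd
  have hDN : Disjoint (nbhd G I) D :=
    disjoint_sdiff.mono_left (nbhd_mono subset_union_left)
  have hID : IsCritIndep G (I ∪ D) :=
    isCritIndep_iff.2 ⟨hI.1.1.union (indep_sdiff_nbhd _) hDN, hI.1.isCritical.union hD⟩
  have hDI : D ⊆ I :=
    union_eq_left.1 (eq_of_subset_of_card_le subset_union_left (hI.2 _ hID)).symm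
  intro x hx
  obtain ⟨hxJ, hxI⟩ := mem_sdiff.1 hx
  refine hDI (mem_sdiff.2 ⟨mem_union_right _ hxJ, ?_⟩)
  rw [nbhd_union, mem_union, not_or]
  exact ⟨hxI, hJ.1.notMem_nbhd hxJ⟩

theorem IsMaxCritIndep.union_nbhd_subset {I J : Finset V} (hI : IsMaxCritIndep G I)
    (hJ : IsMaxCritIndep G J) : I ∪ nbhd G I ⊆ J ∪ nbhd G J := by
  have hcard : #I = #J := le_antisymm (hJ.2 I hI.1) (hI.2 J hJ.1)
  have hdiff : diffI G (I ∪ J) = diffI G J :=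
    le_antisymm (hJ.1.isCritical _) ((hI.1.isCritical.union hJ.1.isCritical) J)
  have hNcard : #(nbhd G I \ nbhd G J) = #(J \ I) := by
    have hN := card_sdiff_add_card (nbhd G I) (nbhd G J)
    have hV := card_sdiff_add_card I J
    rw [← card_sdiff_comm hcard]
    simp only [diffI, nbhd_union] at hdiff
    omega
  have hJI : J \ I ⊆ nbhd G I \ nbhd G J := by
    intro x hx
    obtain ⟨hxJ, hxI⟩ := mem_sdiff.1 hx
    refine mem_sdiff.2 ⟨?_, hJ.1.1.notMem_nbhd hxJ⟩
    by_contra hxN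
    exact hxI (hI.sdiff_nbhd_subset hJ.1 (mem_sdiff.2 ⟨hxJ, hxN⟩))
  have hNJ : nbhd G I \ nbhd G J = J \ I := (eq_of_subset_of_card_le hJI hNcard.le).symm
  intro x hx
  by_cases hxN : x ∈ nbhd G J
  · exact mem_union_right _ hxN
  refine mem_union_left _ ?_
  rcases mem_union.1 hx with hxI | hxN'
  · exact hJ.sdiff_nbhd_subset hI.1 (mem_sdiff.2 ⟨hxI, hxN⟩)
  · exact (mem_sdiff.1 (hNJ ▸ mem_sdiff.2 ⟨hxN', hxN⟩)).1

omit [DecidableEq V] [DecidableRel G.Adj] in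
theorem exists_isMaxIndep : ∃ S : Finset V, IsMaxIndep G S := by
  classical
  obtain ⟨S, hS, hmax⟩ := exists_max_image (univ.filter (Indep G)) card
    ⟨∅, mem_filter.2 ⟨mem_univ _, by simp [Indep]⟩⟩
  exact ⟨S, (mem_filter.1 hS).2, fun T hT => hmax T (mem_filter.2 ⟨mem_univ _, hT⟩)⟩

theorem IsMaxIndep.isMaxIndepOn_sdiff {I S : Finset V} (hI : IsCritIndep G I)
    (hS : IsMaxIndep G S) :
    IsMaxIndepOn G (univ \ (I ∪ nbhd G I)) (S \ (I ∪ nbhd G I)) := by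
  refine ⟨sdiff_subset_sdiff (subset_univ S) subset_rfl, hS.1.mono sdiff_subset,
    fun T hTL hT => ?_⟩
  have hdisj := disjoint_union_left.1 (disjoint_sdiff.mono_right hTL)
  have hIT := hS.2 _ (hI.1.union hT hdisj.2)
  rw [card_union_of_disjoint hdisj.1] at hIT
  have := card_inter_add_card_sdiff S (I ∪ nbhd G I)
  have := hI.card_inter_union_nbhd_le hS.1
  omega

theorem IsMaxIndepOn.isMaxIndep_union {I T : Finset V} (hI : IsCritIndep G I)
    (hT : IsMaxIndepOn G (univ \ (I ∪ nbhd G I)) T) : IsMaxIndep G (I ∪ T) := by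
  have hdisj := disjoint_union_left.1 (disjoint_sdiff.mono_right hT.1)
  refine ⟨hI.1.union hT.2.1 hdisj.2, fun U hU => ?_⟩
  rw [card_union_of_disjoint hdisj.1]
  have := card_inter_add_card_sdiff U (I ∪ nbhd G I)
  have := hI.card_inter_union_nbhd_le hU
  have := hT.2.2 _ (sdiff_subset_sdiff (subset_univ U) subset_rfl) (hU.mono sdiff_subset)
  omega

end

theorem stmt19 (I : Finset V) (hI : IsMaxCritIndep G I) :
    core G = coreOn G (univ \ (I ∪ nbhd G I)) ∪ (core G ∩ ↑(I ∪ nbhd G I)) ∧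
    (core G ∩ ↑(I ∪ nbhd G I) =
      ⋂ (S : Finset V) (_ : IsMaxIndep G S), ((S : Set V) ∩ ↑(I ∪ nbhd G I))) ∧
    core G ∩ ↑(I ∪ nbhd G I) ⊆ nucleus G := by
  obtain ⟨S₀, hS₀⟩ := exists_isMaxIndep (G := G)
  refine ⟨Set.ext fun v => ⟨fun hv => ?_, ?_⟩, Set.ext fun v => ?_, ?_⟩
  · by_cases hvL : v ∈ I ∪ nbhd G I
    · exact Or.inr ⟨hv, hvL⟩
    · refine Or.inl fun T hT => (mem_union.1 (hv _ (hT.isMaxIndep_union hI.1))).resolve_left ?_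
      exact fun hvI => hvL (mem_union_left _ hvI)
  · rintro (hv | hv)
    · exact fun S hS => (mem_sdiff.1 (hv _ (hS.isMaxIndepOn_sdiff hI.1))).1
    · exact hv.1
  · simp only [core, Set.mem_inter_iff, Set.mem_iInter, mem_coe]
    exact ⟨fun ⟨hv, hvL⟩ S hS => ⟨hv S hS, hvL⟩,
      fun h => ⟨fun S hS => (h S hS).1, (h S₀ hS₀).2⟩⟩
  · rintro v ⟨hv, hvL⟩ J hJ
    have hvS := hv _ ((hS₀.isMaxIndepOn_sdiff hJ.1).isMaxIndep_union hJ.1)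
    have hvLJ := hI.union_nbhd_subset hJ hvL
    exact (mem_union.1 hvS).resolve_right fun h => (mem_sdiff.1 h).2 hvLJ
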